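/- If C is a k-qubit Clifford operation, j ∈ {1,…,k}, and t ∈ {0,+,↻}^k is chosen uniformly at random, then the probability that the j-th qubit of C|t⟩ is in a standard basis state (i.e., that |t⟩ is an eigenvector of C*(I^{⊗(j−1)} ⊗ Z ⊗ I^{⊗(k−j)})C) is at least 3^{−k}. -/
import Mathlib


open Matrix Complex ComplexOrder

noncomputable section

def pX : Matrix (Fin 2) (Fin 2) ℂ := !![0, 1; 1, 0]
def pZ : Matrix (Fin 2) (Fin 2) ℂ := !![1, 0; 0, -1]

def pauli : Fin 4 → Matrix (Fin 2) (Fin 2) ℂ :=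
  ![1, pX, !![0, -Complex.I; Complex.I, 0], pZ]

/-- The Pauli operator `X^a Z^b` on `k` qubits. -/
def XZ (k : ℕ) (a b : Fin k → Fin 2) : Matrix (Fin k → Fin 2) (Fin k → Fin 2) ℂ :=
  Matrix.of fun x y => ∏ j, (pX ^ (a j).val * pZ ^ (b j).val) (x j) (y j)

/-- Membership in the `k`-qubit Pauli group. -/
def InPauliGroup {k : ℕ} (A : Matrix (Fin k → Fin 2) (Fin k → Fin 2) ℂ) : Prop :=
  ∃ (α : ℂ) (a b : Fin k → Fin 2),
    α ∈ ({1, Complex.I, -1, -Complex.I} : Set ℂ) ∧ A = α • XZ k a b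

/-- A `k`-qubit Clifford operation: a unitary normalizing the Pauli group. -/
def IsClifford {k : ℕ} (C : Matrix (Fin k → Fin 2) (Fin k → Fin 2) ℂ) : Prop :=
  Cᴴ * C = 1 ∧ ∀ A, InPauliGroup A → InPauliGroup (C * A * Cᴴ)

/-- The single-qubit states `|0⟩`, `|+⟩ = (|0⟩+|1⟩)/√2`,
`|↻⟩ = (|0⟩−i|1⟩)/√2` (eigenvectors of `Z`, `X`, `Y` respectively). -/
def trapState : Fin 3 → (Fin 2 → ℂ) :=
  ![![1, 0],
    ![1/(Real.sqrt 2 : ℂ), 1/(Real.sqrt 2 : ℂ)],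
    ![1/(Real.sqrt 2 : ℂ), -Complex.I/(Real.sqrt 2 : ℂ)]]

/-- The product state `|t⟩` for `t ∈ {0,+,↻}^k`. -/
def ketTrap {k : ℕ} (t : Fin k → Fin 3) : (Fin k → Fin 2) → ℂ :=
  fun x => ∏ i, trapState (t i) (x i)

/-- The operator `I^{⊗(j−1)} ⊗ Z ⊗ I^{⊗(k−j)}`: Pauli `Z` on qubit `j`. -/
def Zat {k : ℕ} (j : Fin k) : Matrix (Fin k → Fin 2) (Fin k → Fin 2) ℂ :=
  Matrix.of fun x y => if x = y then (if x j = 1 then -1 else 1) else 0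

/-! ### Auxiliary lemmas -/

/-- The trap state chosen to be an eigenvector of `X^a Z^b`. -/
def tch : Fin 2 → Fin 2 → Fin 3 := fun a b => if a = 0 then 0 else if b = 0 then 1 else 2

lemma single_eigen (a b : Fin 2) : ∃ μ : ℂ,
    (pX ^ a.val * pZ ^ b.val).mulVec (trapState (tch a b)) = μ • trapState (tch a b) := by
  fin_cases a <;> fin_cases b
  · exact ⟨1, by funext x; fin_cases x <;>
      simp [pX, pZ, tch, trapState, mulVec, dotProduct, Fin.sum_univ_two]⟩
  · exact ⟨1, by funext x; fin_cases x <;>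
      simp [pX, pZ, tch, trapState, mulVec, dotProduct, Fin.sum_univ_two]⟩
  · exact ⟨1, by funext x; fin_cases x <;>
      simp [pX, pZ, tch, trapState, mulVec, dotProduct, Fin.sum_univ_two]⟩
  · exact ⟨Complex.I, by funext x; fin_cases x <;>
      simp [pX, pZ, tch, trapState, mulVec, dotProduct, Fin.sum_univ_two, pow_one] <;>
      ring_nf <;> simp [Complex.I_sq]⟩

lemma mulVec_XZ {k : ℕ} (a b : Fin k → Fin 2) (t : Fin k → Fin 3) (μ : Fin k → ℂ)
    (h : ∀ i, (pX ^ (a i).val * pZ ^ (b i).val).mulVec (trapState (t i)) = μ i • trapState (t i)) :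
    (XZ k a b).mulVec (ketTrap t) = (∏ i, μ i) • ketTrap t := by
  funext x
  have key : (XZ k a b).mulVec (ketTrap t) x
      = ∏ i, ((pX ^ (a i).val * pZ ^ (b i).val).mulVec (trapState (t i))) (x i) := by
    simp only [mulVec, dotProduct, XZ, ketTrap, Matrix.of_apply]
    rw [Finset.prod_univ_sum (fun _ => Finset.univ)
      (f := fun i c => (pX ^ (a i).val * pZ ^ (b i).val) (x i) c * trapState (t i) c),
      Fintype.piFinset_univ]
    exact Finset.sum_congr rfl fun y _ => (Finset.prod_mul_distrib).symm
  rw [key]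
  simp only [h]
  simp [ketTrap, Finset.prod_mul_distrib, Pi.smul_apply, smul_eq_mul]

/-- Every `k`-qubit Pauli has some trap tensor product state as an eigenvector. -/
lemma pauli_has_trap_eigenvector {k : ℕ} {A : Matrix (Fin k → Fin 2) (Fin k → Fin 2) ℂ}
    (hA : InPauliGroup A) :
    ∃ (t : Fin k → Fin 3) (μ : ℂ), A.mulVec (ketTrap t) = μ • ketTrap t := by
  obtain ⟨α, a, b, -, rfl⟩ := hA
  choose μ hμ using fun i => single_eigen (a i) (b i)
  refine ⟨fun i => tch (a i) (b i), α * ∏ i, μ i, ?_⟩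
  rw [Matrix.smul_mulVec, mulVec_XZ a b _ μ hμ, smul_smul]

lemma fin2_cases (v : Fin 2) : v = 0 ∨ v = 1 := by omega

lemma Zat_eq_XZ {k : ℕ} (j : Fin k) :
    Zat j = XZ k 0 (fun i => if i = j then 1 else 0) := by
  ext x y
  simp only [Zat, XZ, Matrix.of_apply, Pi.zero_apply]
  by_cases hxy : x = y
  · subst hxy
    rw [if_pos rfl]
    rw [Finset.prod_eq_single j]
    · rcases fin2_cases (x j) with h | h <;> simp [h, pZ, pX]
    · intro i _ hij
      rcases fin2_cases (x i) with h | h <;> simp [hij, h, pX, pZ]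
    · simp
  · rw [if_neg hxy]
    obtain ⟨i, hi⟩ : ∃ i, x i ≠ y i := by
      by_contra h; push_neg at h; exact hxy (funext h)
    symm
    apply Finset.prod_eq_zero (Finset.mem_univ i)
    rcases fin2_cases (x i) with h | h <;> rcases fin2_cases (y i) with h2 | h2 <;>
      by_cases hij : i = j <;> simp_all [pX, pZ, hij]

lemma inPauli_Zat {k : ℕ} (j : Fin k) : InPauliGroup (Zat j) :=
  ⟨1, 0, fun i => if i = j then 1 else 0, by simp, by rw [one_smul]; exact Zat_eq_XZ j⟩

lemma pauliSet_finite (k : ℕ) :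
    (setOf (InPauliGroup (k := k))).Finite := by
  have : setOf (InPauliGroup (k := k)) ⊆
      (fun p : ℂ × (Fin k → Fin 2) × (Fin k → Fin 2) => p.1 • XZ k p.2.1 p.2.2) ''
        (({1, Complex.I, -1, -Complex.I} : Set ℂ) ×ˢ Set.univ) := by
    rintro A ⟨α, a, b, hα, rfl⟩
    exact ⟨(α, a, b), ⟨hα, Set.mem_univ _⟩, rfl⟩
  refine Set.Finite.subset (Set.Finite.image _ ?_) this
  exact Set.Finite.prod (Set.toFinite _) (Set.toFinite _)

/-- The conjugated `Z` operator is again a Pauli operator. -/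
lemma conj_Zat_inPauli {k : ℕ} {C : Matrix (Fin k → Fin 2) (Fin k → Fin 2) ℂ}
    (hC : IsClifford C) (j : Fin k) : InPauliGroup (Cᴴ * Zat j * C) := by
  obtain ⟨hu, hn⟩ := hC
  have hu' : C * Cᴴ = 1 := mul_eq_one_comm.mp hu
  set S := setOf (InPauliGroup (k := k)) with hS
  have hmap : Set.MapsTo (fun A => C * A * Cᴴ) S S := fun A hA => hn A hA
  have hinj : Set.InjOn (fun A => C * A * Cᴴ) S := by
    intro A hA B hB h
    simp only at h
    have h2 := congrArg (fun M => Cᴴ * M * C) h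
    calc A = (Cᴴ * C) * A * (Cᴴ * C) := by rw [hu, Matrix.one_mul, Matrix.mul_one]
      _ = Cᴴ * (C * A * Cᴴ) * C := by simp only [Matrix.mul_assoc]
      _ = Cᴴ * (C * B * Cᴴ) * C := h2
      _ = (Cᴴ * C) * B * (Cᴴ * C) := by simp only [Matrix.mul_assoc]
      _ = B := by rw [hu, Matrix.one_mul, Matrix.mul_one]
  have hbij := ((pauliSet_finite k).injOn_iff_bijOn_of_mapsTo hmap).mp hinj
  obtain ⟨A, hA, hAeq⟩ := hbij.surjOn (inPauli_Zat j)
  simp only at hAeq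
  have : Cᴴ * Zat j * C = A := by
    rw [← hAeq]
    calc Cᴴ * (C * A * Cᴴ) * C = (Cᴴ * C) * A * (Cᴴ * C) := by
          simp only [Matrix.mul_assoc]
      _ = A := by rw [hu, Matrix.one_mul, Matrix.mul_one]
  rw [this]; exact hA

/-- for a `k`-qubit Clifford `C`, `j ∈ {1,…,k}`, and a uniformly
random `t ∈ {0,+,↻}^k`, the probability that the `j`-th qubit of `C|t⟩` is in
a standard basis state (i.e. that `|t⟩` is an eigenvector of
`C*(I^{⊗(j−1)} ⊗ Z ⊗ I^{⊗(k−j)})C`) is at least `3^{−k}`. -/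
theorem trap_standard_basis_probability (k : ℕ) (hk : 0 < k)
    (C : Matrix (Fin k → Fin 2) (Fin k → Fin 2) ℂ) (hC : IsClifford C)
    (j : Fin k) :
    ((3 : ℝ)⁻¹) ^ k ≤
      (Nat.card {t : Fin k → Fin 3 //
          ∃ μ : ℂ, (Cᴴ * Zat j * C).mulVec (ketTrap t) = μ • ketTrap t} : ℝ)
        / 3 ^ k := by
  obtain ⟨t, μ, ht⟩ := pauli_has_trap_eigenvector (conj_Zat_inPauli hC j)
  have hne : Nonempty {t : Fin k → Fin 3 //
      ∃ μ : ℂ, (Cᴴ * Zat j * C).mulVec (ketTrap t) = μ • ketTrap t} := ⟨⟨t, μ, ht⟩⟩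
  have hpos : 0 < Nat.card {t : Fin k → Fin 3 //
      ∃ μ : ℂ, (Cᴴ * Zat j * C).mulVec (ketTrap t) = μ • ketTrap t} := Nat.card_pos
  have h1 : (1 : ℝ) ≤ (Nat.card {t : Fin k → Fin 3 //
      ∃ μ : ℂ, (Cᴴ * Zat j * C).mulVec (ketTrap t) = μ • ketTrap t} : ℝ) := by
    exact_mod_cast hpos
  rw [inv_pow, inv_eq_one_div]
  apply div_le_div_of_nonneg_right h1 (by positivity) |>.trans_eq rfl
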